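/- arXiv:1308.6145 — 2 statements merged into one kernel-verified Lean document; each statement's English description precedes it below -/
import Mathlib

section
/- In a leaf-oriented search tree satisfying the invariant W, inserting a key e into a leaf l with e ∈ R_l (the leaf's permanent range) preserves W. -/
/-- A `k`-ary leaf-oriented search tree: a leaf carries a finite set of keys; an internal
node carries a nonempty list of children, each paired with its upper separator key. -/
inductive STree : Type where
  | leaf (F : Finset ℕ) : STree
  | node (cs : List (STree × ℕ)) : STree

/-- The key set `E` of a tree: the union of the key sets of its leaves. -/
def STree.keys : STree → Finset ℕ
  | .leaf F => F
  | .node [] => ∅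
  | .node ((t, _) :: cs) => t.keys ∪ (STree.node cs).keys

/-- The search-tree invariant `W lo hi t`: all keys of `t` lie in `(lo, hi]`, separators are
strictly increasing, and each child's keys lie in the interval determined by the separators. -/
def STree.W : ℕ → ℕ → STree → Prop
  | lo, hi, .leaf F => ∀ e ∈ F, lo < e ∧ e ≤ hi
  | _,  _,  .node [] => False
  | lo, hi, .node [(t, s)] => s = hi ∧ STree.W lo hi t
  | lo, hi, .node ((t, s) :: c :: cs) =>
      lo < s ∧ s < hi ∧ STree.W lo s t ∧ STree.W s hi (STree.node (c :: cs))

/-- The leaves of a tree together with their permanent ranges `R_l = (lo, hi]`,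
obtained by refining the root interval along the root-to-leaf path. -/
def STree.leafRanges : ℕ → ℕ → STree → List (Finset ℕ × ℕ × ℕ)
  | lo, hi, .leaf F => [(F, lo, hi)]
  | _,  _,  .node [] => []
  | lo, hi, .node [(t, _)] => t.leafRanges lo hi
  | lo, hi, .node ((t, s) :: c :: cs) =>
      t.leafRanges lo s ++ (STree.node (c :: cs)).leafRanges s hi

/-- `InsertedAt e lo hi t t'`: `t'` is obtained from `t` (whose assigned interval is
`(lo, hi]`) by inserting the key `e` into the key set of exactly one leaf `l` whose
permanent range `R_l` contains `e`. -/
inductive InsertedAt (e : ℕ) : ℕ → ℕ → STree → STree → Prop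
  | leaf (lo hi : ℕ) (F : Finset ℕ) : lo < e → e ≤ hi →
      InsertedAt e lo hi (.leaf F) (.leaf (insert e F))
  | head (lo hi : ℕ) (t t' : STree) (s : ℕ) (cs : List (STree × ℕ)) :
      InsertedAt e lo s t t' →
      InsertedAt e lo hi (.node ((t, s) :: cs)) (.node ((t', s) :: cs))
  | tail (lo hi : ℕ) (t : STree) (s : ℕ) (cs cs' : List (STree × ℕ)) :
      InsertedAt e s hi (.node cs) (.node cs') →
      InsertedAt e lo hi (.node ((t, s) :: cs)) (.node ((t, s) :: cs'))

theorem insert_W (e : ℕ) : ∀ (lo hi : ℕ) (t t' : STree),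
    InsertedAt e lo hi t t' → STree.W lo hi t → STree.W lo hi t' := by
  intro lo hi t t' h
  induction h with
  | leaf lo hi F h1 h2 =>
      intro hW
      simp only [STree.W] at hW ⊢
      intro x hx
      simp only [Finset.mem_insert] at hx
      rcases hx with rfl | hx
      · exact ⟨h1, h2⟩
      · exact hW x hx
  | head lo hi t t' s cs hh ih =>
      cases cs with
      | nil =>
        intro hW; simp only [STree.W] at hW ⊢
        obtain ⟨rfl, hW2⟩ := hW
        exact ⟨rfl, ih hW2⟩
      | cons c cs =>
        intro hW; simp only [STree.W] at hW ⊢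
        exact ⟨hW.1, hW.2.1, ih hW.2.2.1, hW.2.2.2⟩
  | tail lo hi t s cs cs' hh ih =>
      cases cs with
      | nil => cases hh
      | cons c cs =>
        intro hW; simp only [STree.W] at hW
        cases cs' with
        | nil => cases hh
        | cons c' cs' =>
          simp only [STree.W]
          exact ⟨hW.1, hW.2.1, hW.2.2.1, ih hW.2.2.2⟩


/-- Inserting a key `e` with `0 < e < 2^63` into a leaf whose permanent range contains `e`
preserves the search-tree invariant `W`. -/
theorem stmt12 (e : ℕ) (he : 0 < e ∧ e < 2 ^ 63) (t t' : STree)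
    (hW : STree.W 0 (2 ^ 63) t)
    (h : InsertedAt e 0 (2 ^ 63) t t') : STree.W 0 (2 ^ 63) t' :=
  insert_W e 0 _ t t' h hW
end

section
/- The ranges R_l of the leaves of a leaf-oriented search tree partition the key universe (0, 2^63): the ranges are pairwise disjoint and their union is the full interval. -/
lemma lr_bounds : ∀ lo hi t, STree.W lo hi t →
    ∀ p ∈ STree.leafRanges lo hi t, lo ≤ p.2.1 ∧ p.2.2 ≤ hi := by
  intro lo hi t
  induction lo, hi, t using STree.leafRanges.induct with
  | case1 lo hi F => intro _ p hp; simp [STree.leafRanges] at hp; simp [hp]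
  | case2 lo hi => intro h; exact absurd h (by simp [STree.W])
  | case3 lo hi t s ih =>
    intro hW; rw [STree.W] at hW; rw [STree.leafRanges]; exact ih hW.2
  | case4 lo hi t s c cs ih1 ih2 =>
    intro hW p hp
    simp only [STree.leafRanges, List.mem_append] at hp
    rw [STree.W] at hW
    obtain ⟨h1, h2, h3, h4⟩ := hW
    rcases hp with hp | hp
    · have := ih1 h3 p hp; exact ⟨this.1, this.2.trans h2.le⟩
    · have := ih2 h4 p hp; exact ⟨h1.le.trans this.1, this.2⟩

lemma lr_main : ∀ lo hi t, STree.W lo hi t →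
    (STree.leafRanges lo hi t).Pairwise
      (fun p q => ∀ x : ℕ, p.2.1 < x ∧ x ≤ p.2.2 → ¬(q.2.1 < x ∧ x ≤ q.2.2)) ∧
    ∀ x : ℕ, (lo < x ∧ x ≤ hi) ↔
      ∃ p ∈ STree.leafRanges lo hi t, p.2.1 < x ∧ x ≤ p.2.2 := by
  intro lo hi t
  induction lo, hi, t using STree.leafRanges.induct with
  | case1 lo hi F =>
    intro _
    constructor
    · simp [STree.leafRanges]
    · intro x; simp [STree.leafRanges]
  | case2 lo hi => intro h; exact absurd h (by simp [STree.W])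
  | case3 lo hi t s ih => intro hW; rw [STree.W] at hW; rw [STree.leafRanges]; exact ih hW.2
  | case4 lo hi t s c cs ih1 ih2 =>
    intro hW
    rw [STree.W] at hW
    obtain ⟨h1, h2, h3, h4⟩ := hW
    obtain ⟨d1, u1⟩ := ih1 h3
    obtain ⟨d2, u2⟩ := ih2 h4
    constructor
    · rw [STree.leafRanges, List.pairwise_append]
      refine ⟨d1, d2, ?_⟩
      intro p hp q hq x hx hx'
      have b1 := lr_bounds _ _ _ h3 p hp
      have b2 := lr_bounds _ _ _ h4 q hq
      have : x ≤ s := hx.2.trans b1.2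
      have : s < x := lt_of_le_of_lt b2.1 hx'.1
      omega
    · intro x
      rw [STree.leafRanges]
      constructor
      · rintro ⟨hl, hr⟩
        rcases le_or_gt x s with h | h
        · obtain ⟨p, hp, hpx⟩ := (u1 x).mp ⟨hl, h⟩
          exact ⟨p, List.mem_append_left _ hp, hpx⟩
        · obtain ⟨p, hp, hpx⟩ := (u2 x).mp ⟨h, hr⟩
          exact ⟨p, List.mem_append_right _ hp, hpx⟩
      · rintro ⟨p, hp, hpx⟩
        rcases List.mem_append.mp hp with hp | hp
        · have := (u1 x).mpr ⟨p, hp, hpx⟩; omega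
        · have := (u2 x).mpr ⟨p, hp, hpx⟩; omega

/-- The ranges of the leaves of a leaf-oriented search tree partition the key universe
`(0, 2^63]`: they are pairwise disjoint and their union is the full interval. -/
theorem stmt17 (t : STree) (hW : STree.W 0 (2 ^ 63) t) :
    (t.leafRanges 0 (2 ^ 63)).Pairwise
      (fun p q => ∀ x : ℕ, p.2.1 < x ∧ x ≤ p.2.2 → ¬(q.2.1 < x ∧ x ≤ q.2.2)) ∧
    ∀ x : ℕ, (0 < x ∧ x ≤ 2 ^ 63) ↔
      ∃ p ∈ t.leafRanges 0 (2 ^ 63), p.2.1 < x ∧ x ≤ p.2.2 := by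
  exact lr_main 0 (2 ^ 63) t hW
end
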